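/- (Identifiability.) In the asymmetric power-transformed GARCH(1,1) model, under assumption A1, if θ ∈ Θ0 then v_t(ϑ) = 1 almost surely if and only if ϑ = ϑ0. -/

import Mathlib

open MeasureTheory ProbabilityTheory Filter Topology Real Matrix

noncomputable section

namespace NonstatGARCH

variable {Ω : Type*} [MeasurableSpace Ω]

/-- Convergence in distribution (weak convergence of the laws) of a sequence of real
random variables towards a probability law `ν` on `ℝ`. -/
def TendstoInDistrib (μ : Measure Ω) (X : ℕ → Ω → ℝ) (ν : Measure ℝ) : Prop :=
  ∀ f : BoundedContinuousFunction ℝ ℝ,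
    Tendsto (fun n => ∫ x, f (X n x) ∂μ) atTop (𝓝 (∫ y, f y ∂ν))

/-- Convergence in probability to a constant. -/
def TendstoInProb (μ : Measure Ω) (X : ℕ → Ω → ℝ) (c : ℝ) : Prop :=
  ∀ e : ℝ, 0 < e → Tendsto (fun n => μ {x | e ≤ |X n x - c|}) atTop (𝓝 0)

/-- The function a₀(x) = α₊ (x⁺)^δ + α₋ (−x⁻)^δ + β. -/
def a0 (δ αp αm β : ℝ) (y : ℝ) : ℝ :=
  αp * (max y 0) ^ δ + αm * (max (-y) 0) ^ δ + β

/-- A point `v` belongs to the support of the law of `Z`. -/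
def InSupport (μ : Measure Ω) (Z : Ω → ℝ) (v : ℝ) : Prop :=
  ∀ e : ℝ, 0 < e → 0 < μ {x | |Z x - v| < e}

/-- Assumption A1: the support of the noise contains at least three points and is not
concentrated on the positive or the negative half-line. -/
def A1 (μ : Measure Ω) (Z : Ω → ℝ) : Prop :=
  (∃ x1 x2 x3 : ℝ, x1 ≠ x2 ∧ x1 ≠ x3 ∧ x2 ≠ x3 ∧
      InSupport μ Z x1 ∧ InSupport μ Z x2 ∧ InSupport μ Z x3) ∧
    μ {x | 0 ≤ Z x} < 1 ∧ μ {x | Z x ≤ 0} < 1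

/-- Assumption A2 : E{1+∑_{i=1}^{t-1} a₀(η₁)⋯a₀(η_i)}⁻¹ = o(1/√t). -/
def A2 (μ : Measure Ω) (δ αp0 αm0 β0 : ℝ) (η : ℤ → Ω → ℝ) : Prop :=
  Tendsto (fun t : ℕ => Real.sqrt t *
      ∫ x, (1 + ∑ i ∈ Finset.Icc 1 (t - 1),
        ∏ k ∈ Finset.Icc 1 i, a0 δ αp0 αm0 β0 (η (k : ℤ) x))⁻¹ ∂μ)
    atTop (𝓝 0)

/-- The asymmetric power-transformed GARCH(1,1) model with parameter
`θp = (ω, α₊, α₋, β)` (as a vector of `Fin 4 → ℝ`), power `δ`, i.i.d. noise `η`,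
observations `ε` and volatility process `h`. -/
structure Model (μ : Measure Ω) (δ : ℝ) (θp : Fin 4 → ℝ) (η : ℤ → Ω → ℝ)
    (ε h : ℕ → Ω → ℝ) : Prop where
  measη : ∀ t, Measurable (η t)
  measε : ∀ t, Measurable (ε t)
  meash : ∀ t, Measurable (h t)
  indep : iIndepFun η μ
  ident : ∀ s t : ℤ, IdentDistrib (η s) (η t) μ μ
  varone : ∫ x, (η 1 x) ^ 2 ∂μ = 1
  nondeg : μ {x | (η 1 x) ^ 2 = 1} < 1
  h0nonneg : ∀ x, 0 ≤ h 0 x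
  hrec : ∀ (t : ℕ) (x : Ω), h (t + 1) x =
    θp 0 + θp 1 * (max (ε t x) 0) ^ δ + θp 2 * (max (-(ε t x)) 0) ^ δ + θp 3 * h t x
  epsdef : ∀ (t : ℕ) (x : Ω), 1 ≤ t → ε t x = (h t x) ^ (1 / δ) * η (t : ℤ) x

/-- Positivity constraints on the true parameter. -/
def ParamPos (θp : Fin 4 → ℝ) : Prop :=
  0 < θp 0 ∧ 0 ≤ θp 1 ∧ 0 ≤ θp 2 ∧ 0 ≤ θp 3

/-- The process σ_t^δ(θ) computed from the observations, with initial value `s0`. -/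
def sigmaD (δ : ℝ) (ε : ℕ → Ω → ℝ) (s0 : Ω → ℝ) (θ : Fin 4 → ℝ) : ℕ → Ω → ℝ
  | 0 => s0
  | t + 1 => fun x =>
      θ 0 + θ 1 * (max (ε t x) 0) ^ δ + θ 2 * (max (-(ε t x)) 0) ^ δ
        + θ 3 * sigmaD δ ε s0 θ t x

/-- σ_t(θ) = (σ_t^δ(θ))^{1/δ}. -/
def sigma (δ : ℝ) (ε : ℕ → Ω → ℝ) (s0 : Ω → ℝ) (θ : Fin 4 → ℝ) (t : ℕ) (x : Ω) : ℝ :=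
  (sigmaD δ ε s0 θ t x) ^ (1 / δ)

/-- The QML loss ℓ_t(θ) = ε_t²/σ_t²(θ) + log σ_t²(θ). -/
def loss (δ : ℝ) (ε : ℕ → Ω → ℝ) (s0 : Ω → ℝ) (θ : Fin 4 → ℝ) (t : ℕ) (x : Ω) : ℝ :=
  (ε t x) ^ 2 / (sigma δ ε s0 θ t x) ^ (2 : ℝ) + Real.log ((sigma δ ε s0 θ t x) ^ (2 : ℝ))

/-- `θhat` is a (measurable) QMLE sequence over the parameter set `Θ`. -/
def IsQMLE (δ : ℝ) (ε : ℕ → Ω → ℝ) (s0 : Ω → ℝ) (Θ : Set (Fin 4 → ℝ))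
    (θhat : ℕ → Ω → Fin 4 → ℝ) : Prop :=
  (∀ n, Measurable (θhat n)) ∧ (∀ n x, θhat n x ∈ Θ) ∧
    ∀ (n : ℕ) (x : Ω), ∀ θ ∈ Θ,
      (n : ℝ)⁻¹ * ∑ t ∈ Finset.Icc 1 n, loss δ ε s0 (θhat n x) t x ≤
        (n : ℝ)⁻¹ * ∑ t ∈ Finset.Icc 1 n, loss δ ε s0 θ t x

/-- Partial derivative of θ ↦ σ_t^δ(θ) in the direction of the i-th coordinate. -/
def gradSigmaD (δ : ℝ) (ε : ℕ → Ω → ℝ) (s0 : Ω → ℝ) (θ : Fin 4 → ℝ) (t : ℕ) (x : Ω)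
    (i : Fin 4) : ℝ :=
  fderiv ℝ (fun ϑ => sigmaD δ ε s0 ϑ t x) θ (Pi.single i 1)

/-- The stationary process d_t^{α₊}. -/
def dAp (δ αp0 αm0 β0 : ℝ) (η : ℤ → Ω → ℝ) (t : ℤ) (x : Ω) : ℝ :=
  ∑' j : ℕ, ((max (η (t - ((j : ℤ) + 1)) x) 0) ^ δ / a0 δ αp0 αm0 β0 (η (t - ((j : ℤ) + 1)) x)) *
      ∏ k ∈ Finset.range j, β0 / a0 δ αp0 αm0 β0 (η (t - ((k : ℤ) + 1)) x)

/-- The stationary process d_t^{α₋}. -/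
def dAm (δ αp0 αm0 β0 : ℝ) (η : ℤ → Ω → ℝ) (t : ℤ) (x : Ω) : ℝ :=
  ∑' j : ℕ, ((max (-(η (t - ((j : ℤ) + 1)) x)) 0) ^ δ / a0 δ αp0 αm0 β0 (η (t - ((j : ℤ) + 1)) x)) *
      ∏ k ∈ Finset.range j, β0 / a0 δ αp0 αm0 β0 (η (t - ((k : ℤ) + 1)) x)

/-- The stationary process d_t^{β}. -/
def dB (δ αp0 αm0 β0 : ℝ) (η : ℤ → Ω → ℝ) (t : ℤ) (x : Ω) : ℝ :=
  ∑' j : ℕ, (j : ℝ) *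
      ((αp0 * (max (η (t - ((j : ℤ) + 1)) x) 0) ^ δ + αm0 * (max (-(η (t - ((j : ℤ) + 1)) x)) 0) ^ δ)
        / (β0 * a0 δ αp0 αm0 β0 (η (t - ((j : ℤ) + 1)) x))) *
      ∏ k ∈ Finset.range j, β0 / a0 δ αp0 αm0 β0 (η (t - ((k : ℤ) + 1)) x)

/-- The vector d_t = (d_t^{α₊}, d_t^{α₋}, d_t^{β})'. -/
def dVec (δ αp0 αm0 β0 : ℝ) (η : ℤ → Ω → ℝ) (t : ℤ) (x : Ω) : Fin 3 → ℝ :=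
  ![dAp δ αp0 αm0 β0 η t x, dAm δ αp0 αm0 β0 η t x, dB δ αp0 αm0 β0 η t x]

/-- The matrix 𝓘 = (4/δ²) E(d₁ d₁'). -/
def Imat (μ : Measure Ω) (δ αp0 αm0 β0 : ℝ) (η : ℤ → Ω → ℝ) : Matrix (Fin 3) (Fin 3) ℝ :=
  Matrix.of fun i j =>
    (4 / δ ^ 2) * ∫ x, dVec δ αp0 αm0 β0 η 1 x i * dVec δ αp0 αm0 β0 η 1 x j ∂μ

/-- The stationary process v_t(ϑ). -/
def vProc (δ αp0 αm0 β0 : ℝ) (η : ℤ → Ω → ℝ) (ϑ : Fin 3 → ℝ) (t : ℤ) (x : Ω) : ℝ :=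
  ∑' j : ℕ,
    ((ϑ 0 * (max (η (t - ((j : ℤ) + 1)) x) 0) ^ δ + ϑ 1 * (max (-(η (t - ((j : ℤ) + 1)) x)) 0) ^ δ)
      / a0 δ αp0 αm0 β0 (η (t - ((j : ℤ) + 1)) x)) *
      ∏ k ∈ Finset.range j, ϑ 2 / a0 δ αp0 αm0 β0 (η (t - ((k : ℤ) + 1)) x)

/-- η_t(θ) = ε_t / σ_t(θ). -/
def etaT (δ : ℝ) (ε : ℕ → Ω → ℝ) (s0 : Ω → ℝ) (θ : Fin 4 → ℝ) (t : ℕ) (x : Ω) : ℝ :=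
  ε t x / sigma δ ε s0 θ t x

/-- The empirical estimator γ_n(θ) of the top Lyapunov exponent. -/
def gammaN (δ : ℝ) (ε : ℕ → Ω → ℝ) (s0 : Ω → ℝ) (θ : Fin 4 → ℝ) (n : ℕ) (x : Ω) : ℝ :=
  (n : ℝ)⁻¹ * ∑ t ∈ Finset.Icc 1 n,
    Real.log (θ 1 * (max (etaT δ ε s0 θ t x) 0) ^ δ + θ 2 * (max (-(etaT δ ε s0 θ t x)) 0) ^ δ + θ 3)

/-- Empirical matrix Ĵ (all four blocks at once, as a 4×4 matrix), evaluated at `θ`. -/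
def Jhat (δ : ℝ) (ε : ℕ → Ω → ℝ) (s0 : Ω → ℝ) (θ : Fin 4 → ℝ) (n : ℕ) (x : Ω) :
    Matrix (Fin 4) (Fin 4) ℝ :=
  Matrix.of fun i j => (4 / δ ^ 2) * (n : ℝ)⁻¹ * ∑ t ∈ Finset.Icc 1 n,
    ((sigmaD δ ε s0 θ t x) ^ 2)⁻¹ * gradSigmaD δ ε s0 θ t x i * gradSigmaD δ ε s0 θ t x j

/-- The universal estimator Î⁎ = Ĵ_{ϑϑ} − Ĵ_{ϑω} Ĵ_{ωω}⁻¹ Ĵ_{ωϑ}. -/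
def IhatStar (δ : ℝ) (ε : ℕ → Ω → ℝ) (s0 : Ω → ℝ) (θ : Fin 4 → ℝ) (n : ℕ) (x : Ω) :
    Matrix (Fin 3) (Fin 3) ℝ :=
  Matrix.of fun i j => Jhat δ ε s0 θ n x i.succ j.succ -
    Jhat δ ε s0 θ n x i.succ 0 * Jhat δ ε s0 θ n x 0 j.succ / Jhat δ ε s0 θ n x 0 0

/-- Estimator κ̂_η of Eη⁴ based on the rescaled residuals. -/
def kappaHat (δ : ℝ) (ε : ℕ → Ω → ℝ) (s0 : Ω → ℝ) (θhat : ℕ → Ω → Fin 4 → ℝ)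
    (n : ℕ) (x : Ω) : ℝ :=
  (n : ℝ)⁻¹ * ∑ t ∈ Finset.Icc 1 n, (etaT δ ε s0 (θhat n x) t x) ^ 4

/-- The standard normal cumulative distribution function. -/
def stdCDF (z : ℝ) : ℝ := (gaussianReal 0 1 (Set.Iic z)).toReal

/-- The symmetry test statistic T_n^S. -/
def TnS (δ : ℝ) (ε : ℕ → Ω → ℝ) (s0 : Ω → ℝ) (θhat : ℕ → Ω → Fin 4 → ℝ)
    (n : ℕ) (x : Ω) : ℝ :=
  Real.sqrt n * (θhat n x 1 - θhat n x 2) /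
    Real.sqrt ((kappaHat δ ε s0 θhat n x - 1) *
      (![1, -1, 0] ⬝ᵥ ((IhatStar δ ε s0 (θhat n x) n x)⁻¹ *ᵥ ![1, -1, 0])))

/-!
If `v_t(ϑ) = 1` a.s., write `u = η_{t-1}`: the series satisfies
`a₀(u) v_t = α₊(u⁺)^δ + α₋(−u⁻)^δ + β v_{t-1}` with `u` independent of `v_{t-1}`, so `v_{t-1}`
is a.s. a constant `K₁` and the identity holds with `v_{t-1} = K₁` for every `u` in the support of
the law of `η`; one step further back gives `K₁ a₀(u) = α₊(u⁺)^δ + α₋(−u⁻)^δ + β K₂`. Under A1 a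
function `u ↦ a(u⁺)^δ + b(−u⁻)^δ + c` vanishing on the support has `a = b = c = 0`; subtracting the
two identities gives `K₁ = 1`, and then the first one gives `ϑ = ϑ₀`.
Conversely, at `ϑ = ϑ₀` the partial sums of the series telescope to
`1 − ∏_{k<n} β₀/a₀(η_{t-k-1})`, and the product tends to `0` a.s. by the strong law of large
numbers because `log β₀ < γ₀`.
-/

open Finset

section A0

variable {δ a b c : ℝ}

lemma continuous_a0 (hδ : 0 ≤ δ) (a b c : ℝ) : Continuous (a0 δ a b c) := by
  have h := Real.continuous_rpow_const hδ
  unfold a0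
  fun_prop

lemma le_a0 (ha : 0 ≤ a) (hb : 0 ≤ b) (u : ℝ) : c ≤ a0 δ a b c u :=
  le_add_of_nonneg_left (add_nonneg (mul_nonneg ha (rpow_nonneg (le_max_right _ _) _))
    (mul_nonneg hb (rpow_nonneg (le_max_right _ _) _)))

lemma a0_pos (ha : 0 ≤ a) (hb : 0 ≤ b) (hc : 0 < c) (u : ℝ) : 0 < a0 δ a b c u :=
  hc.trans_le (le_a0 ha hb u)

lemma a0_of_nonneg (hδ : 0 < δ) {u : ℝ} (hu : 0 ≤ u) : a0 δ a b c u = a * u ^ δ + c := by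
  simp [a0, max_eq_left hu, max_eq_right (neg_nonpos.2 hu), zero_rpow hδ.ne']

lemma a0_of_nonpos (hδ : 0 < δ) {u : ℝ} (hu : u ≤ 0) : a0 δ a b c u = b * (-u) ^ δ + c := by
  simp [a0, max_eq_right hu, max_eq_left (neg_nonneg.2 hu), zero_rpow hδ.ne']

lemma eq_zero_of_mul_rpow_add_eq_zero (hδ : δ ≠ 0) {u w : ℝ} (hu : 0 ≤ u) (hw : 0 ≤ w)
    (huw : u ≠ w) (h_u : a * u ^ δ + c = 0) (h_w : a * w ^ δ + c = 0) : a = 0 ∧ c = 0 := by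
  have hne : u ^ δ - w ^ δ ≠ 0 := sub_ne_zero.2 fun h => huw ((rpow_left_inj hu hw hδ).1 h)
  have ha : a = 0 := (mul_eq_zero.1 (by linear_combination h_u - h_w)).resolve_right hne
  exact ⟨ha, by simpa [ha] using h_u⟩

lemma eq_zero_of_a0_eq_zero (hδ : 0 < δ) {p m q : ℝ} (hp : 0 < p) (hm : m < 0) (hqp : q ≠ p)
    (hqm : q ≠ m) (h_p : a0 δ a b c p = 0) (h_m : a0 δ a b c m = 0) (h_q : a0 δ a b c q = 0) :
    a = 0 ∧ b = 0 ∧ c = 0 := by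
  rw [a0_of_nonneg hδ hp.le] at h_p
  rw [a0_of_nonpos hδ hm.le] at h_m
  have hp' : p ^ δ ≠ 0 := (rpow_pos_of_pos hp δ).ne'
  have hm' : (-m) ^ δ ≠ 0 := (rpow_pos_of_pos (neg_pos.2 hm) δ).ne'
  rcases le_total q 0 with hq | hq
  · rw [a0_of_nonpos hδ hq] at h_q
    obtain ⟨rfl, rfl⟩ := eq_zero_of_mul_rpow_add_eq_zero hδ.ne' (neg_nonneg.2 hq)
      (neg_nonneg.2 hm.le) (neg_injective.ne hqm) h_q h_m
    simp [hp'] at h_p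
    exact ⟨h_p, rfl, rfl⟩
  · rw [a0_of_nonneg hδ hq] at h_q
    obtain ⟨rfl, rfl⟩ := eq_zero_of_mul_rpow_add_eq_zero hδ.ne' hq hp.le hqp h_q h_p
    simp [hm'] at h_m
    exact ⟨rfl, h_m, rfl⟩

end A0

section Products

lemma tendsto_prod_range_zero_of_tendsto_avg_log {R : ℕ → ℝ} (hR : ∀ k, 0 < R k) {L : ℝ}
    (hL : L < 0) (h : Tendsto (fun n : ℕ => (∑ k ∈ range n, log (R k)) / n) atTop (𝓝 L)) :
    Tendsto (fun n => ∏ k ∈ range n, R k) atTop (𝓝 0) := by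
  have hlog : Tendsto (fun n : ℕ => ∑ k ∈ range n, log (R k)) atTop atBot := by
    refine (Tendsto.atTop_mul_neg hL tendsto_natCast_atTop_atTop h).congr' ?_
    filter_upwards [eventually_ne_atTop 0] with n hn
    field_simp
  refine (tendsto_exp_atBot.comp hlog).congr fun n => ?_
  rw [Function.comp_apply, ← log_prod fun k _ => (hR k).ne', exp_log (prod_pos fun k _ => hR k)]

lemma hasSum_prod_range_mul_one_sub {R : ℕ → ℝ} (h0 : ∀ k, 0 ≤ R k) (h1 : ∀ k, R k ≤ 1)
    (h : Tendsto (fun n => ∏ k ∈ range n, R k) atTop (𝓝 0)) :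
    HasSum (fun j => (∏ k ∈ range j, R k) * (1 - R j)) 1 := by
  have hpartial (n : ℕ) :
      ∑ j ∈ range n, (∏ k ∈ range j, R k) * (1 - R j) = 1 - ∏ k ∈ range n, R k := by
    induction n with
    | zero => simp
    | succ n ih => rw [sum_range_succ, ih, prod_range_succ]; ring
  rw [hasSum_iff_tendsto_nat_of_nonneg
    fun j => mul_nonneg (prod_nonneg fun k _ => h0 k) (sub_nonneg.2 (h1 j))]
  simpa [hpartial] using (tendsto_const_nhds (x := (1 : ℝ))).sub h

end Products

section Support

variable {μ : Measure Ω} {Z : Ω → ℝ}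

lemma inSupport_iff_mem_support (hZ : Measurable Z) {v : ℝ} :
    InSupport μ Z v ↔ v ∈ (μ.map Z).support := by
  rw [Metric.nhds_basis_ball.mem_measureSupport]
  refine forall₂_congr fun e _ => ?_
  rw [Measure.map_apply hZ measurableSet_ball]
  rfl

lemma A1.exists_mem_support [IsProbabilityMeasure μ] (hZ : Measurable Z) (h : A1 μ Z) :
    ∃ p ∈ (μ.map Z).support, ∃ m ∈ (μ.map Z).support, ∃ q ∈ (μ.map Z).support,
      0 < p ∧ m < 0 ∧ q ≠ p ∧ q ≠ m := by
  obtain ⟨⟨x₁, x₂, x₃, h₁₂, h₁₃, h₂₃, hx₁, hx₂, hx₃⟩, hnonneg, hnonpos⟩ := h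
  simp only [inSupport_iff_mem_support hZ] at hx₁ hx₂ hx₃
  have hpos : 0 < μ.map Z (Set.Ioi 0) := by
    have : Z ⁻¹' Set.Ioi 0 = {x | Z x ≤ 0}ᶜ := by ext; simp
    rw [Measure.map_apply hZ measurableSet_Ioi, this,
      prob_compl_eq_one_sub (measurableSet_le hZ measurable_const)]
    exact tsub_pos_of_lt hnonpos
  have hneg : 0 < μ.map Z (Set.Iio 0) := by
    have : Z ⁻¹' Set.Iio 0 = {x | 0 ≤ Z x}ᶜ := by ext; simp
    rw [Measure.map_apply hZ measurableSet_Iio, this,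
      prob_compl_eq_one_sub (measurableSet_le measurable_const hZ)]
    exact tsub_pos_of_lt hnonneg
  obtain ⟨p, hp, hp_supp⟩ := Measure.nonempty_inter_support_of_pos hpos
  obtain ⟨m, hm, hm_supp⟩ := Measure.nonempty_inter_support_of_pos hneg
  -- of three distinct points, one differs from both `p` and `m`
  obtain ⟨q, hq_supp, hqp, hqm⟩ : ∃ q ∈ (μ.map Z).support, q ≠ p ∧ q ≠ m := by
    by_contra! H
    have := H x₁ hx₁
    have := H x₂ hx₂
    have := H x₃ hx₃
    grind
  exact ⟨p, hp_supp, m, hm_supp, q, hq_supp, hp, hm, hqp, hqm⟩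

lemma A1.eq_zero_of_a0_eq_zero [IsProbabilityMeasure μ] {δ a b c : ℝ} (hδ : 0 < δ)
    (hZ : Measurable Z) (h : A1 μ Z) (h0 : ∀ v ∈ (μ.map Z).support, a0 δ a b c v = 0) :
    a = 0 ∧ b = 0 ∧ c = 0 := by
  obtain ⟨p, hp_supp, m, hm_supp, q, hq_supp, hp, hm, hqp, hqm⟩ := h.exists_mem_support hZ
  exact NonstatGARCH.eq_zero_of_a0_eq_zero hδ hp hm hqp hqm (h0 p hp_supp) (h0 m hm_supp)
    (h0 q hq_supp)

end Support

section Independence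

variable {α β : Type*} [MeasurableSpace α] [MeasurableSpace β] {μ : Measure Ω}

lemma _root_.ProbabilityTheory.IndepFun.ae_ae_map_of_ae [IsFiniteMeasure μ] {X : Ω → α}
    {Y : Ω → β} (hX : Measurable X) (hY : Measurable Y) (hXY : IndepFun X Y μ)
    {p : α × β → Prop} (hp : MeasurableSet {z | p z})
    (h : ∀ᵐ x ∂μ, p (X x, Y x)) : ∀ᵐ u ∂μ.map X, ∀ᵐ w ∂μ.map Y, p (u, w) := by
  apply Measure.ae_ae_of_ae_prod
  rw [← (indepFun_iff_map_prod_eq_prod_map_map hX.aemeasurable hY.aemeasurable).1 hXY]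
  exact (ae_map_iff (hX.prodMk hY).aemeasurable hp).2 h

lemma _root_.ProbabilityTheory.IndepFun.exists_ae_eq_const_of_ae_eq_comp [TopologicalSpace α]
    [OpensMeasurableSpace α] [IsProbabilityMeasure μ] {X : Ω → α} {Y : Ω → ℝ}
    (hX : Measurable X) (hY : Measurable Y) (hXY : IndepFun X Y μ) {G : α → ℝ}
    (hG : Continuous G) (h : ∀ᵐ x ∂μ, Y x = G (X x)) :
    ∃ c, (∀ᵐ x ∂μ, Y x = c) ∧ ∀ v ∈ (μ.map X).support, G v = c := by
  have hslice : ∀ᵐ u ∂μ.map X, ∀ᵐ w ∂μ.map Y, w = G u :=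
    hXY.ae_ae_map_of_ae hX hY (p := fun z => z.2 = G z.1)
      (measurableSet_eq_fun measurable_snd (hG.measurable.comp measurable_fst)) h
  have := Measure.isProbabilityMeasure_map (μ := μ) hX.aemeasurable
  have := Measure.isProbabilityMeasure_map (μ := μ) hY.aemeasurable
  obtain ⟨u₀, hu₀⟩ := hslice.exists
  have hG_ae : ∀ᵐ u ∂μ.map X, G u = G u₀ := by
    filter_upwards [hslice] with u hu
    obtain ⟨w, hw, hw₀⟩ := (hu.and hu₀).exists
    rw [← hw, hw₀]
  exact ⟨G u₀, (ae_map_iff hY.aemeasurable (measurableSet_singleton _)).1 hu₀,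
    Measure.support_subset_of_isClosed (isClosed_eq hG continuous_const) hG_ae⟩

lemma _root_.ProbabilityTheory.iIndepFun.indepFun_of_measurable_biSup {ι : Type*}
    {f : ι → Ω → β} (hf : ∀ i, Measurable (f i)) (hind : iIndepFun f μ) {i : ι} {S : Set ι}
    (hi : i ∉ S) {Y : Ω → α} (hY : Measurable[⨆ j ∈ S, MeasurableSpace.comap (f j) ‹_›] Y) :
    IndepFun (f i) Y μ := by
  rw [IndepFun_iff_Indep]
  have := indep_iSup_of_disjoint (fun j => (hf j).comap_le)
    ((iIndepFun_iff_iIndep _ _ _).1 hind) (Set.disjoint_singleton_left.2 hi)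
  refine indep_of_indep_of_le_right (indep_of_indep_of_le_left this ?_) hY.comap_le
  exact le_iSup₂ (f := fun j (_ : j ∈ ({i} : Set ι)) => MeasurableSpace.comap (f j) ‹_›) i rfl

lemma strong_law_ae_real_backward {η : ℤ → Ω → ℝ}
    (hind : iIndepFun η μ) (hident : ∀ s, IdentDistrib (η s) (η 1) μ μ) {f : ℝ → ℝ}
    (hf : Measurable f) (hint : Integrable (fun x => f (η 1 x)) μ) (t : ℤ) :
    ∀ᵐ x ∂μ, Tendsto (fun n : ℕ => (∑ k ∈ range n, f (η (t - ((k : ℤ) + 1)) x)) / n) atTop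
      (𝓝 (∫ x, f (η 1 x) ∂μ)) := by
  set X : ℕ → Ω → ℝ := fun k x => f (η (t - ((k : ℤ) + 1)) x)
  have hX : ∀ k, IdentDistrib (X k) (fun x => f (η 1 x)) μ μ := fun k => (hident _).comp hf
  have hindX : Pairwise (Function.onFun (IndepFun · · μ) X) := fun i j hij =>
    (hind.indepFun (by omega)).comp hf hf
  have := strong_law_ae_real X ((hX 0).integrable_iff.2 hint) hindX
    fun k => (hX k).trans (hX 0).symm
  rwa [(hX 0).integral_eq] at this

end Independence

section VProcess

omit [MeasurableSpace Ω]

variable {δ a b c : ℝ} {η : ℤ → Ω → ℝ} {ϑ : Fin 3 → ℝ}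

def vTerm (δ a b c : ℝ) (η : ℤ → Ω → ℝ) (ϑ : Fin 3 → ℝ) (t : ℤ) (x : Ω) (j : ℕ) : ℝ :=
  ((ϑ 0 * (max (η (t - ((j : ℤ) + 1)) x) 0) ^ δ + ϑ 1 * (max (-(η (t - ((j : ℤ) + 1)) x)) 0) ^ δ)
      / a0 δ a b c (η (t - ((j : ℤ) + 1)) x)) *
    ∏ k ∈ range j, ϑ 2 / a0 δ a b c (η (t - ((k : ℤ) + 1)) x)

lemma vProc_eq_tsum (t : ℤ) (x : Ω) : vProc δ a b c η ϑ t x = ∑' j, vTerm δ a b c η ϑ t x j :=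
  rfl

lemma vTerm_zero (t : ℤ) (x : Ω) :
    vTerm δ a b c η ϑ t x 0 = a0 δ (ϑ 0) (ϑ 1) 0 (η (t - 1) x) / a0 δ a b c (η (t - 1) x) := by
  simp [vTerm, a0]

lemma vTerm_succ (t : ℤ) (x : Ω) (j : ℕ) :
    vTerm δ a b c η ϑ t x (j + 1)
      = ϑ 2 / a0 δ a b c (η (t - 1) x) * vTerm δ a b c η ϑ (t - 1) x j := by
  have hshift (k : ℕ) : t - (((k + 1 : ℕ) : ℤ) + 1) = t - 1 - ((k : ℤ) + 1) := by push_cast; ring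
  simp only [vTerm, prod_range_succ', hshift]
  simp only [Nat.cast_zero, zero_add]
  ring

lemma summable_vTerm_sub_one (hA : ∀ u, a0 δ a b c u ≠ 0) (hϑ : ϑ 2 ≠ 0) {t : ℤ} {x : Ω}
    (hs : Summable (vTerm δ a b c η ϑ t x)) : Summable (vTerm δ a b c η ϑ (t - 1) x) := by
  have := (summable_nat_add_iff 1).2 hs
  simp only [vTerm_succ] at this
  exact (summable_mul_left_iff (div_ne_zero hϑ (hA _))).1 this

/-- Since `a0 δ α₊ α₋ β u = α₊ (u⁺)^δ + α₋ (−u⁻)^δ + β`, this is the recursion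
`a₀(u) v_t = ϑ₀ (u⁺)^δ + ϑ₁ (−u⁻)^δ + ϑ₂ v_{t-1}` at `u = η_{t-1}`. -/
lemma a0_mul_vProc (hA : ∀ u, a0 δ a b c u ≠ 0) {t : ℤ} {x : Ω}
    (hs : Summable (vTerm δ a b c η ϑ t x)) :
    a0 δ a b c (η (t - 1) x) * vProc δ a b c η ϑ t x
      = a0 δ (ϑ 0) (ϑ 1) (ϑ 2 * vProc δ a b c η ϑ (t - 1) x) (η (t - 1) x) := by
  rw [vProc_eq_tsum, hs.tsum_eq_zero_add, vTerm_zero]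
  simp only [vTerm_succ, tsum_mul_left, ← vProc_eq_tsum]
  have := hA (η (t - 1) x)
  field_simp
  simp only [a0]
  ring

lemma vTerm_self (hA : ∀ u, a0 δ a b c u ≠ 0) (t : ℤ) (x : Ω) (j : ℕ) :
    vTerm δ a b c η ![a, b, c] t x j
      = (∏ k ∈ range j, c / a0 δ a b c (η (t - ((k : ℤ) + 1)) x))
        * (1 - c / a0 δ a b c (η (t - ((j : ℤ) + 1)) x)) := by
  have := hA (η (t - ((j : ℤ) + 1)) x)
  simp only [vTerm, Matrix.cons_val_zero, Matrix.cons_val_one, Matrix.cons_val_two,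
    Matrix.head_cons, Matrix.tail_cons]
  field_simp
  simp only [a0]
  ring

lemma measurable_vProc {m : MeasurableSpace Ω} {t : ℤ}
    (hη : ∀ j : ℕ, Measurable[m] (η (t - ((j : ℤ) + 1)))) :
    Measurable[m] (vProc δ a b c η ϑ t) :=
  Measurable.tsum fun j => by
    simp only [a0]
    fun_prop

end VProcess

section Identification

variable {μ : Measure Ω} {δ a b c : ℝ} {η : ℤ → Ω → ℝ} {ϑ : Fin 3 → ℝ}

lemma indepFun_vProc (hη : ∀ s, Measurable (η s)) (hind : iIndepFun η μ) (t : ℤ) :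
    IndepFun (η t) (vProc δ a b c η ϑ t) μ := by
  refine hind.indepFun_of_measurable_biSup hη Set.self_notMem_Iio <|
    measurable_vProc fun j => Measurable.of_comap_le ?_
  have hj : t - ((j : ℤ) + 1) ∈ Set.Iio t := by simp only [Set.mem_Iio]; omega
  exact le_iSup₂ (f := fun s (_ : s ∈ Set.Iio t) => MeasurableSpace.comap (η s) inferInstance)
    _ hj

lemma exists_ae_vProc_sub_one_eq_const [IsProbabilityMeasure μ] (hδ : 0 ≤ δ)
    (hA : ∀ u, a0 δ a b c u ≠ 0) (hϑ : ϑ 2 ≠ 0) (hη : ∀ s, Measurable (η s))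
    (hind : iIndepFun η μ) {t : ℤ} {K : ℝ}
    (hK : ∀ᵐ x ∂μ, vProc δ a b c η ϑ t x = K)
    (hs : ∀ᵐ x ∂μ, Summable (vTerm δ a b c η ϑ t x)) :
    ∃ K', (∀ᵐ x ∂μ, vProc δ a b c η ϑ (t - 1) x = K') ∧
      ∀ v ∈ (μ.map (η (t - 1))).support, K * a0 δ a b c v = a0 δ (ϑ 0) (ϑ 1) (ϑ 2 * K') v := by
  set G : ℝ → ℝ := fun u => (K * a0 δ a b c u - a0 δ (ϑ 0) (ϑ 1) 0 u) / ϑ 2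
  have hG : Continuous G :=
    ((continuous_const.mul (continuous_a0 hδ a b c)).sub (continuous_a0 hδ _ _ _)).div_const _
  have hrec : ∀ᵐ x ∂μ, vProc δ a b c η ϑ (t - 1) x = G (η (t - 1) x) := by
    filter_upwards [hK, hs] with x hKx hsx
    have := a0_mul_vProc hA hsx
    rw [hKx] at this
    rw [eq_div_iff hϑ]
    simp only [a0] at this ⊢
    linarith
  obtain ⟨K', hK', hGK'⟩ := (indepFun_vProc hη hind (t - 1)).exists_ae_eq_const_of_ae_eq_comp
    (hη _) (measurable_vProc fun _ => hη _) hG hrec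
  refine ⟨K', hK', fun v hv => ?_⟩
  have := (div_eq_iff hϑ).1 (hGK' v hv)
  simp only [a0] at this ⊢
  linarith

theorem eq_of_ae_vProc_eq_one [IsProbabilityMeasure μ] (hδ : 0 < δ)
    (hA : ∀ u, a0 δ a b c u ≠ 0) (ha : a ≠ 0) (hϑ : ϑ 2 ≠ 0) (hη : ∀ s, Measurable (η s))
    (hind : iIndepFun η μ) (hident : ∀ s, IdentDistrib (η s) (η 1) μ μ) (hA1 : A1 μ (η 1))
    {t : ℤ} (hv : ∀ᵐ x ∂μ, vProc δ a b c η ϑ t x = 1) :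
    ϑ 0 = a ∧ ϑ 1 = b ∧ ϑ 2 = c := by
  have hs : ∀ᵐ x ∂μ, Summable (vTerm δ a b c η ϑ t x) := by
    filter_upwards [hv] with x hx
    by_contra hns
    rw [vProc_eq_tsum, tsum_eq_zero_of_not_summable hns] at hx
    exact zero_ne_one hx
  obtain ⟨K₁, hK₁, h₁⟩ := exists_ae_vProc_sub_one_eq_const hδ.le hA hϑ hη hind hv hs
  obtain ⟨K₂, -, h₂⟩ := exists_ae_vProc_sub_one_eq_const hδ.le hA hϑ hη hind hK₁
    (hs.mono fun x => summable_vTerm_sub_one hA hϑ)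
  rw [(hident _).map_eq] at h₁ h₂
  have hK₁_eq : K₁ = 1 := by
    obtain ⟨h, -, -⟩ := hA1.eq_zero_of_a0_eq_zero hδ (hη 1) (a := (1 - K₁) * a)
      (b := (1 - K₁) * b) (c := (1 - K₁) * c - ϑ 2 * (K₁ - K₂)) fun v hv => by
        have e₁ := h₁ v hv
        have e₂ := h₂ v hv
        simp only [a0] at e₁ e₂ ⊢
        linear_combination e₁ - e₂
    linarith [(mul_eq_zero.1 h).resolve_right ha]
  subst hK₁_eq
  obtain ⟨h0, h1, h2⟩ := hA1.eq_zero_of_a0_eq_zero hδ (hη 1) (a := ϑ 0 - a) (b := ϑ 1 - b)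
    (c := ϑ 2 - c) fun v hv => by
      have e₁ := h₁ v hv
      simp only [a0] at e₁ ⊢
      linear_combination -e₁
  exact ⟨by linarith, by linarith, by linarith⟩

theorem ae_vProc_self_eq_one (hδ : 0 ≤ δ) (ha : 0 ≤ a) (hb : 0 ≤ b) (hc : 0 < c)
    (hind : iIndepFun η μ) (hident : ∀ s, IdentDistrib (η s) (η 1) μ μ)
    (hint : Integrable (fun x => log (a0 δ a b c (η 1 x))) μ)
    (hlt : c < exp (∫ x, log (a0 δ a b c (η 1 x)) ∂μ)) (t : ℤ) :
    ∀ᵐ x ∂μ, vProc δ a b c η ![a, b, c] t x = 1 := by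
  have hA := a0_pos (δ := δ) ha hb hc
  have hf : Measurable fun u => log (a0 δ a b c u) :=
    measurable_log.comp (continuous_a0 hδ a b c).measurable
  filter_upwards [strong_law_ae_real_backward hind hident hf hint t] with x hx
  set R : ℕ → ℝ := fun k => c / a0 δ a b c (η (t - ((k : ℤ) + 1)) x)
  have hR : ∀ k, 0 < R k := fun k => div_pos hc (hA _)
  have hR₁ : ∀ k, R k ≤ 1 := fun k => (div_le_one (hA _)).2 (le_a0 ha hb _)
  have hprod : Tendsto (fun n => ∏ k ∈ range n, R k) atTop (𝓝 0) := by
    refine tendsto_prod_range_zero_of_tendsto_avg_log hR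
      (sub_neg.2 ((log_lt_iff_lt_exp hc).2 hlt)) ((tendsto_const_nhds.sub hx).congr' ?_)
    filter_upwards [eventually_ne_atTop 0] with n hn
    simp only [R, log_div hc.ne' (hA _).ne', sum_sub_distrib, sum_const, card_range, nsmul_eq_mul]
    field_simp
  have hsum := hasSum_prod_range_mul_one_sub (fun k => (hR k).le) hR₁ hprod
  rw [← funext (vTerm_self (fun u => (hA u).ne') t x)] at hsum
  exact hsum.tsum_eq

end Identification

theorem identifiability_general
    {Ω : Type*} [MeasurableSpace Ω] (μ : Measure Ω) [IsProbabilityMeasure μ]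
    (δ : ℝ) (hδ : 0 < δ)
    (θ0 : Fin 4 → ℝ)
    (η : ℤ → Ω → ℝ) (ε h : ℕ → Ω → ℝ)
    (hmod : Model μ δ θ0 η ε h)
    (hA1 : A1 μ (η 1))
    (Θ : Set (Fin 4 → ℝ))
    (hΘpos : ∀ θ ∈ Θ, ∀ i, 0 < θ i)
    (hθ0mem : θ0 ∈ Θ)
    (γ0 : ℝ) (hγint : Integrable (fun x => Real.log (a0 δ (θ0 1) (θ0 2) (θ0 3) (η 1 x))) μ)
    (hγdef : γ0 = ∫ x, Real.log (a0 δ (θ0 1) (θ0 2) (θ0 3) (η 1 x)) ∂μ)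
    (θ : Fin 4 → ℝ) (hθmem : θ ∈ Θ) (hθΘ0 : θ 3 < Real.exp γ0)
    (t : ℤ) :
    (∀ᵐ x ∂μ, vProc δ (θ0 1) (θ0 2) (θ0 3) η ![θ 1, θ 2, θ 3] t x = 1) ↔
      (θ 1 = θ0 1 ∧ θ 2 = θ0 2 ∧ θ 3 = θ0 3) := by
  have hθ0_pos := hΘpos θ0 hθ0mem
  have hA (u : ℝ) : a0 δ (θ0 1) (θ0 2) (θ0 3) u ≠ 0 :=
    (a0_pos (hθ0_pos 1).le (hθ0_pos 2).le (hθ0_pos 3) u).ne'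
  have hident (s : ℤ) : IdentDistrib (η s) (η 1) μ μ := hmod.ident s 1
  constructor
  · intro hv
    exact eq_of_ae_vProc_eq_one hδ hA (hθ0_pos 1).ne' (hΘpos θ hθmem 3).ne' hmod.measη
      hmod.indep hident hA1 hv
  · rintro ⟨h1, h2, h3⟩
    rw [h1, h2, h3]
    exact ae_vProc_self_eq_one hδ.le (hθ0_pos 1).le (hθ0_pos 2).le (hθ0_pos 3) hmod.indep hident
      hγint (hγdef ▸ h3 ▸ hθΘ0) t

/-- **Identifiability** (Lemma 7.2).  Under assumption A1, for `θ ∈ Θ₀`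
(i.e. `θ ∈ Θ` with `β < e^{γ₀}`), one has `v_t(ϑ) = 1` a.s. if and only if
`ϑ = ϑ₀`. -/
theorem identifiability
    {Ω : Type*} [MeasurableSpace Ω] (μ : Measure Ω) [IsProbabilityMeasure μ]
    (δ : ℝ) (hδ : 0 < δ)
    (θ0 : Fin 4 → ℝ) (hθ0 : ParamPos θ0)
    (η : ℤ → Ω → ℝ) (ε h : ℕ → Ω → ℝ)
    (hmod : Model μ δ θ0 η ε h)
    (hA1 : A1 μ (η 1))
    (Θ : Set (Fin 4 → ℝ)) (hΘc : IsCompact Θ)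
    (hΘpos : ∀ θ ∈ Θ, ∀ i, 0 < θ i)
    (hθ0mem : θ0 ∈ Θ)
    (γ0 : ℝ) (hγint : Integrable (fun x => Real.log (a0 δ (θ0 1) (θ0 2) (θ0 3) (η 1 x))) μ)
    (hγdef : γ0 = ∫ x, Real.log (a0 δ (θ0 1) (θ0 2) (θ0 3) (η 1 x)) ∂μ)
    (θ : Fin 4 → ℝ) (hθmem : θ ∈ Θ) (hθΘ0 : θ 3 < Real.exp γ0)
    (t : ℤ) :
    (∀ᵐ x ∂μ, vProc δ (θ0 1) (θ0 2) (θ0 3) η ![θ 1, θ 2, θ 3] t x = 1) ↔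
      (θ 1 = θ0 1 ∧ θ 2 = θ0 2 ∧ θ 3 = θ0 3) :=
  identifiability_general μ δ hδ θ0 η ε h hmod hA1 Θ hΘpos hθ0mem γ0 hγint hγdef θ hθmem hθΘ0 t

end NonstatGARCH
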